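/- Suppose λ ∈ K is not equal to −p for any positive integer p. Then: the kernel of the even part of D(m) equals the image under D(−1) of the odd part of C(−1); and the image under D(−1) of the even part of C(−1) is a codimension-1 subspace of the kernel of the odd part of D(m), with O5 a cocycle not lying in this image. That is, H^{m+2}(d_λ) is 1-dimensional and odd, spanned by the class of ψ^{1,1,m}_1, the tangent direction along the family d_λ. -/

import Mathlib

/-!
In degree `m + 2` all four differentials are explicit sparse matrices, so everything reduces to
solving linear equations in the coordinates `x 0, …, x 5` (indexed from `0`, so `O5` is `x 4`).
Both `ker D_e(m)` and `im D_o(-1)` are cut out by `x 1 = 0`, `x 4 = x 3`, `x 0 = -λ x 3`; for the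
image this needs `λ + 1` and `λ + m + 1` invertible. Using `λ + m + 2 ≠ 0`, `ker D_o(m)` is cut
out by `x 2 = x 3 = 0`, `x 5 = -λ x 0`, and `im D_e(-1)` by these together with `x 4 = λ x 1`.
The single missing equation gives `ker D_o(m) = im D_e(-1) ⊕ K ∙ O5`.
-/

namespace LinfCohomology

variable {K : Type*} [Field K] [CharZero K]

/- Cochain conventions: for `n ≥ 0`, the even part of `C(n)` has coordinates
`E1,…,E6` (for `φ^{1,0,n+1}_1, φ^{1,0,n+1}_2, φ^{0,1,n+1}_1, φ^{0,1,n+1}_2,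
φ^{0,0,n+2}_3, φ^{1,1,n}_3`) and the odd part has coordinates `O1,…,O6` (for
`ψ^{1,0,n+1}_3, ψ^{0,1,n+1}_3, ψ^{0,0,n+2}_1, ψ^{0,0,n+2}_2, ψ^{1,1,n}_1,
ψ^{1,1,n}_2`); `C(-1)` has even coordinates `E1,…,E5` and odd `O1,…,O4`. -/

/-- The even part of the coboundary operator `D(n)` of
`d_λ = ψ^{0,1,m+1}_3 + λψ^{1,1,m}_1`, for `n ≥ 0`:
`E1 ↦ -(n+1)O5`, `E2 ↦ -O1+(λ-n-1)O6`, `E3 ↦ 0`, `E4 ↦ -O2-λO5`,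
`E5 ↦ (n+1-m)O2-λmO5`, `E6 ↦ 0`. -/
def De (m : ℕ) (lam : K) (n : ℕ) : (Fin 6 → K) →ₗ[K] (Fin 6 → K) :=
  Matrix.mulVecLin
    !![0, -1, 0, 0, 0, 0;
       0, 0, 0, -1, (n : K) + 1 - (m : K), 0;
       0, 0, 0, 0, 0, 0;
       0, 0, 0, 0, 0, 0;
       -((n : K) + 1), 0, 0, -lam, -(lam * (m : K)), 0;
       0, lam - (n : K) - 1, 0, 0, 0, 0]

/-- The odd part of the coboundary operator `D(n)` of `d_λ`, for `n ≥ 0`: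
`O1 ↦ (λ+m-n)E6`, `O2 ↦ 0`, `O3 ↦ (λ+n+2)E3`, `O4 ↦ -λE1+(n+2)E4+E5`,
`O5 ↦ 0`, `O6 ↦ E6`. -/
def Do (m : ℕ) (lam : K) (n : ℕ) : (Fin 6 → K) →ₗ[K] (Fin 6 → K) :=
  Matrix.mulVecLin
    !![0, 0, 0, -lam, 0, 0;
       0, 0, 0, 0, 0, 0;
       0, 0, lam + (n : K) + 2, 0, 0, 0;
       0, 0, 0, (n : K) + 2, 0, 0;
       0, 0, 0, 1, 0, 0;
       lam + (m : K) - (n : K), 0, 0, 0, 0, 1]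

/-- The even part of `D(-1)` of `d_λ` (on degree-1 cochains):
`E1 ↦ 0`, `E2 ↦ -O1+λO6`, `E3 ↦ 0`, `E4 ↦ -O2-λO5`, `E5 ↦ -mO2-λmO5`. -/
def DeNeg1 (m : ℕ) (lam : K) : (Fin 5 → K) →ₗ[K] (Fin 6 → K) :=
  Matrix.mulVecLin
    !![0, -1, 0, 0, 0;
       0, 0, 0, -1, -(m : K);
       0, 0, 0, 0, 0;
       0, 0, 0, 0, 0;
       0, 0, 0, -lam, -(lam * (m : K));
       0, lam, 0, 0, 0]

/-- The odd part of `D(-1)` of `d_λ` (on degree-1 cochains):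
`O1 ↦ (λ+m+1)E6`, `O2 ↦ 0`, `O3 ↦ (λ+1)E3`, `O4 ↦ -λE1+E4+E5`. -/
def DoNeg1 (m : ℕ) (lam : K) : (Fin 4 → K) →ₗ[K] (Fin 6 → K) :=
  Matrix.mulVecLin
    !![0, 0, 0, -lam;
       0, 0, 0, 0;
       0, 0, lam + 1, 0;
       0, 0, 0, 1;
       0, 0, 0, 1;
       lam + (m : K) + 1, 0, 0, 0]

open Matrix

omit [CharZero K] in
lemma De_apply (m : ℕ) (lam : K) (n : ℕ) (x : Fin 6 → K) :
    De m lam n x = ![-x 1, -x 3 + ((n : K) + 1 - m) * x 4, 0, 0,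
      -((n : K) + 1) * x 0 - lam * x 3 - lam * m * x 4, (lam - n - 1) * x 1] := by
  ext i; fin_cases i <;> simp [De, mulVec, dotProduct, Fin.sum_univ_succ]; ring

omit [CharZero K] in
lemma Do_apply (m : ℕ) (lam : K) (n : ℕ) (x : Fin 6 → K) :
    Do m lam n x = ![-lam * x 3, 0, (lam + n + 2) * x 2, (n + 2) * x 3, x 3,
      (lam + m - n) * x 0 + x 5] := by
  ext i; fin_cases i <;> simp [Do, mulVec, dotProduct, Fin.sum_univ_succ]

omit [CharZero K] in
lemma DeNeg1_apply (m : ℕ) (lam : K) (x : Fin 5 → K) :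
    DeNeg1 m lam x = ![-x 1, -x 3 - m * x 4, 0, 0, -lam * x 3 - lam * m * x 4, lam * x 1] := by
  ext i; fin_cases i <;> simp [DeNeg1, mulVec, dotProduct, Fin.sum_univ_succ] <;> ring

omit [CharZero K] in
lemma DoNeg1_apply (m : ℕ) (lam : K) (x : Fin 4 → K) :
    DoNeg1 m lam x = ![-lam * x 3, 0, (lam + 1) * x 2, x 3, x 3, (lam + m + 1) * x 0] := by
  ext i; fin_cases i <;> simp [DoNeg1, mulVec, dotProduct, Fin.sum_univ_succ]

lemma mem_ker_De_self_iff {m : ℕ} {lam : K} {x : Fin 6 → K} :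
    x ∈ LinearMap.ker (De m lam m) ↔ x 1 = 0 ∧ x 4 = x 3 ∧ x 0 = -lam * x 3 := by
  simp only [LinearMap.mem_ker, De_apply, cons_eq_zero_iff, zero_empty, and_true, true_and]
  constructor
  · rintro ⟨h₁, h₄, h₀, -⟩
    have hx4 : x 4 = x 3 := by linear_combination h₄
    refine ⟨neg_eq_zero.mp h₁, hx4, mul_left_cancel₀ (Nat.cast_add_one_ne_zero m) ?_⟩
    linear_combination -h₀ - lam * m * hx4
  · rintro ⟨hx1, hx4, hx0⟩
    refine ⟨by simp [hx1], by simp [hx4], ?_, by simp [hx1]⟩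
    rw [hx4, hx0]; ring

omit [CharZero K] in
lemma mem_range_DoNeg1_iff {m : ℕ} {lam : K} (h₁ : lam + 1 ≠ 0) (hm : lam + m + 1 ≠ 0)
    {x : Fin 6 → K} :
    x ∈ LinearMap.range (DoNeg1 m lam) ↔ x 1 = 0 ∧ x 4 = x 3 ∧ x 0 = -lam * x 3 := by
  constructor
  · rintro ⟨o, rfl⟩
    simp [DoNeg1_apply]
  · rintro ⟨hx1, hx4, hx0⟩
    refine ⟨![x 5 / (lam + m + 1), 0, x 2 / (lam + 1), x 3], ?_⟩
    ext i; fin_cases i <;> simp [DoNeg1_apply, hx1, hx4, hx0, mul_div_cancel₀, h₁, hm]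

lemma mem_ker_Do_self_iff {m : ℕ} {lam : K} (h : lam + m + 2 ≠ 0) {x : Fin 6 → K} :
    x ∈ LinearMap.ker (Do m lam m) ↔ x 2 = 0 ∧ x 3 = 0 ∧ x 5 = -lam * x 0 := by
  have hm : (m : K) + 2 ≠ 0 := by exact_mod_cast Nat.succ_ne_zero (m + 1)
  simp only [LinearMap.mem_ker, Do_apply, cons_eq_zero_iff, zero_empty, and_true, true_and,
    add_sub_cancel_right, mul_eq_zero, h, hm, false_or]
  constructor
  · rintro ⟨-, hx2, hx3, -, hx5⟩
    exact ⟨hx2, hx3, by linear_combination hx5⟩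
  · rintro ⟨hx2, hx3, hx5⟩
    exact ⟨Or.inr hx3, hx2, hx3, hx3, by linear_combination hx5⟩

omit [CharZero K] in
lemma mem_range_DeNeg1_iff {m : ℕ} {lam : K} {x : Fin 6 → K} :
    x ∈ LinearMap.range (DeNeg1 m lam) ↔
      x 2 = 0 ∧ x 3 = 0 ∧ x 5 = -lam * x 0 ∧ x 4 = lam * x 1 := by
  constructor
  · rintro ⟨e, rfl⟩
    simp [DeNeg1_apply]; ring
  · rintro ⟨hx2, hx3, hx5, hx4⟩
    refine ⟨![0, -x 0, 0, -x 1, 0], ?_⟩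
    ext i; fin_cases i <;> simp [DeNeg1_apply, hx2, hx3, hx4, hx5]

lemma range_DoNeg1_eq_ker_De_self {m : ℕ} {lam : K} (h₁ : lam + 1 ≠ 0)
    (hm : lam + m + 1 ≠ 0) :
    LinearMap.range (DoNeg1 m lam) = LinearMap.ker (De m lam m) := by
  ext x; rw [mem_range_DoNeg1_iff h₁ hm, mem_ker_De_self_iff]

omit [CharZero K] in
lemma notMem_range_DeNeg1 {m : ℕ} {lam : K} :
    (![0, 0, 0, 0, 1, 0] : Fin 6 → K) ∉ LinearMap.range (DeNeg1 m lam) := by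
  rw [mem_range_DeNeg1_iff]
  simp

lemma ker_Do_self_eq_range_DeNeg1_sup {m : ℕ} {lam : K} (h : lam + m + 2 ≠ 0) :
    LinearMap.ker (Do m lam m) =
      LinearMap.range (DeNeg1 m lam) ⊔ K ∙ (![0, 0, 0, 0, 1, 0] : Fin 6 → K) := by
  refine le_antisymm (fun x hx ↦ ?_) (sup_le (fun x hx ↦ ?_) ?_)
  · rw [mem_ker_Do_self_iff h] at hx
    refine Submodule.mem_sup.mpr ⟨x - (x 4 - lam * x 1) • ![0, 0, 0, 0, 1, 0], ?_, _,
      Submodule.smul_mem _ _ (Submodule.mem_span_singleton_self _), sub_add_cancel _ _⟩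
    rw [mem_range_DeNeg1_iff]
    simp [hx]
  · rw [mem_range_DeNeg1_iff] at hx
    rw [mem_ker_Do_self_iff h]
    exact ⟨hx.1, hx.2.1, hx.2.2.1⟩
  · rw [Submodule.span_singleton_le_iff_mem, mem_ker_Do_self_iff h]
    simp

/-- If `λ` is not a negative integer: the kernel of the even part of `D(m)` equals
the image under `D(-1)` of the odd part of `C(-1)`, and the image under `D(-1)` of
the even part of `C(-1)` is a codimension-1 subspace of the kernel of the odd part
of `D(m)`, with `O5` a cocycle not lying in this image. That is, `H^{m+2}(d_λ)`
is 1-dimensional and odd, spanned by the class of `ψ^{1,1,m}_1`. -/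
theorem dLam_middle_cohomology (m : ℕ) (lam : K)
    (hlam : ∀ p : ℕ, 0 < p → lam ≠ -(p : K)) :
    LinearMap.range (DoNeg1 m lam) = LinearMap.ker (De m lam m) ∧
    LinearMap.range (DeNeg1 m lam) ≤ LinearMap.ker (Do m lam m) ∧
    (![0, 0, 0, 0, 1, 0] : Fin 6 → K) ∈ LinearMap.ker (Do m lam m) ∧
    (![0, 0, 0, 0, 1, 0] : Fin 6 → K) ∉ LinearMap.range (DeNeg1 m lam) ∧
    Module.finrank K (LinearMap.ker (Do m lam m)) =
      Module.finrank K (LinearMap.range (DeNeg1 m lam)) + 1 := by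
  have hne (p : ℕ) : lam + p + 1 ≠ 0 := fun h ↦
    hlam (p + 1) p.succ_pos (by push_cast; linear_combination h)
  have h₁ : lam + 1 ≠ 0 := by simpa using hne 0
  have h₂ : lam + m + 2 ≠ 0 := by convert hne (m + 1) using 1; push_cast; ring
  have hker := ker_Do_self_eq_range_DeNeg1_sup h₂
  refine ⟨range_DoNeg1_eq_ker_De_self h₁ (hne m), hker ▸ le_sup_left,
    hker ▸ Submodule.mem_sup_right (Submodule.mem_span_singleton_self _),
    notMem_range_DeNeg1, ?_⟩
  rw [hker, Submodule.finrank_sup_span_singleton notMem_range_DeNeg1]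

end LinfCohomology
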